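/- arXiv:1008.1434 — 7 statements merged into one kernel-verified Lean document; each statement's English description precedes it below -/
import Mathlib

section
/- Let A be a unital complex algebra, Γ an invertible element of A, and δ : A → A a linear map such that δ(Γ) = δ(Γ S₁)S₂ + Γ S₁ δ(S₂) whenever S₁S₂ = 1. Then for every idempotent P in A, δ(Γ P) = δ(Γ)P + Γ δ(P). -/
/-!
For scalars `u, v` with `u + v = uv = 1` and an idempotent `P`, the elements `1 - uP` and `1 - vP`
are mutually inverse. Feeding this factorisation of `1` into the hypothesis (which also forces
`δ 1 = 0`) gives one linear relation between `δ(ΓP)`, `δ(Γ)P + Γδ(P)` and `δ(ΓP)P + ΓPδ(P)`;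
exchanging `u` and `v` and subtracting leaves `(v - u)(δ(Γ)P + Γδ(P) - δ(ΓP)) = 0`. Over `ℂ` the two
roots of `x² - x + 1` are distinct, so `v - u` can be cancelled.
-/

section
variable {R A : Type*} [CommRing R] [Ring A] [Algebra R A]

theorem one_sub_smul_mul_one_sub_smul_of_isIdempotentElem {P : A} (hP : IsIdempotentElem P)
    {u v : R} (hsum : u + v = 1) (hprod : u * v = 1) : (1 - u • P) * (1 - v • P) = 1 := by
  calc (1 - u • P) * (1 - v • P) = 1 - (u + v) • P + (u * v) • (P * P) := by
        simp only [mul_sub, sub_mul, one_mul, mul_one, smul_mul_smul_comm, add_smul]; abel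
    _ = 1 := by rw [hsum, hprod, hP.eq, one_smul, sub_add_cancel]

variable {Γ : A} (δ : A →ₗ[R] A)
  (h : ∀ S₁ S₂ : A, S₁ * S₂ = 1 → δ Γ = δ (Γ * S₁) * S₂ + Γ * S₁ * δ S₂)
include h

theorem map_one_eq_zero_of_forall_mul_eq_one (hΓ : IsLeftRegular Γ) : δ 1 = 0 :=
  hΓ <| by simpa using h 1 1 (mul_one 1)

theorem smul_add_smul_eq_of_forall_mul_eq_one (hδ : δ 1 = 0) {P : A} (hP : IsIdempotentElem P)
    {u v : R} (hsum : u + v = 1) (hprod : u * v = 1) :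
    v • (δ Γ * P + Γ * δ P) + u • δ (Γ * P) = δ (Γ * P) * P + Γ * P * δ P := by
  have := h _ _ (one_sub_smul_mul_one_sub_smul_of_isIdempotentElem hP hsum hprod)
  simp only [mul_sub, sub_mul, mul_one, mul_neg, smul_mul_assoc, mul_smul_comm, map_sub, map_smul,
    hδ, zero_sub] at this
  linear_combination (norm := skip) this
  match_scalars <;> grind
end

theorem map_mul_of_isIdempotentElem_of_forall_mul_eq_one {K A : Type*} [Field K] [Ring A]
    [Algebra K A] {Γ : A} (hΓ : IsLeftRegular Γ) (δ : A →ₗ[K] A)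
    (h : ∀ S₁ S₂ : A, S₁ * S₂ = 1 → δ Γ = δ (Γ * S₁) * S₂ + Γ * S₁ * δ S₂)
    {u v : K} (hne : u ≠ v) (hsum : u + v = 1) (hprod : u * v = 1)
    {P : A} (hP : IsIdempotentElem P) : δ (Γ * P) = δ Γ * P + Γ * δ P := by
  have hδ := map_one_eq_zero_of_forall_mul_eq_one δ h hΓ
  have huv := smul_add_smul_eq_of_forall_mul_eq_one δ h hδ hP hsum hprod
  have hvu := smul_add_smul_eq_of_forall_mul_eq_one δ h hδ hP (u := v) (v := u)
    (by rwa [add_comm]) (by rwa [mul_comm])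
  have hzero : (v - u) • (δ Γ * P + Γ * δ P - δ (Γ * P)) = 0 := by
    linear_combination (norm := module) huv - hvu
  rw [smul_eq_zero, sub_eq_zero, sub_eq_zero] at hzero
  exact (hzero.resolve_left hne.symm).symm

theorem Complex.exists_add_eq_one_mul_eq_one_ne :
    ∃ u v : ℂ, u ≠ v ∧ u + v = 1 ∧ u * v = 1 := by
  obtain ⟨s, hs⟩ := IsAlgClosed.exists_eq_mul_self (-3 : ℂ)
  have hs0 : s ≠ 0 := by rintro rfl; norm_num at hs
  refine ⟨(1 + s) / 2, (1 - s) / 2, ?_, by ring, by linear_combination hs / 4⟩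
  intro heq
  exact hs0 (by linear_combination heq)

/-- If `Γ` is invertible and `δ` is linear with
`δ(Γ) = δ(Γ S₁) S₂ + Γ S₁ δ(S₂)` whenever `S₁ S₂ = 1`, then for every idempotent `P`
one has `δ(Γ P) = δ(Γ) P + Γ δ(P)`. -/
theorem stmt3 {A : Type*} [Ring A] [Algebra ℂ A] (Γ : A) (hΓ : IsUnit Γ)
    (δ : A →ₗ[ℂ] A)
    (h : ∀ S₁ S₂ : A, S₁ * S₂ = 1 → δ Γ = δ (Γ * S₁) * S₂ + Γ * S₁ * δ S₂) :
    ∀ P : A, P * P = P → δ (Γ * P) = δ Γ * P + Γ * δ P := by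
  obtain ⟨u, v, hne, hsum, hprod⟩ := Complex.exists_add_eq_one_mul_eq_one_ne
  exact fun P hP ↦ map_mul_of_isIdempotentElem_of_forall_mul_eq_one hΓ.isRegular.left δ h hne
    hsum hprod hP
end

section
/- Let A = T(n, ℂ) be the algebra of n×n upper triangular complex matrices (n ≥ 1), Γ an invertible element of A, and δ : A → A a linear map satisfying δ(Γ) = δ(Γ S₁)S₂ + Γ S₁ δ(S₂) for all S₁, S₂ in A with S₁S₂ = I. Then δ(S₁)S₂ + S₁δ(S₂) = 0 for all S₁, S₂ in A with S₁S₂ = I; in particular δ is a derivable map at I with δ(I) = 0. -/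
/-!
Write `D(R) = δ(ΓR) - δ(Γ)R - Γδ(R)`; it is linear in `R`. Feeding the hypothesis the pairs
`(1 ± E, 1 ∓ E)` for `E² = 0`, and `(1 - 2P, 1 - 2P)`, `(1 + P, 1 - P/2)` for `P² = P`, shows
that `D` vanishes on square-zero elements and on idempotents. The matrix units span `T(n, ℂ)`
and each is one or the other, so `D = 0`. The hypothesis then reads
`Γ (δ(S₁)S₂ + S₁δ(S₂)) = 0`, and `Γ` cancels.
-/

/-- The algebra `T(n, ℂ)` of upper triangular `n × n` complex matrices, as a
unital subalgebra of `Matₙ(ℂ)`. -/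
def upperTriangularAlg (n : ℕ) : Subalgebra ℂ (Matrix (Fin n) (Fin n) ℂ) where
  carrier := {M | M.BlockTriangular id}
  mul_mem' := fun ha hb => ha.mul hb
  add_mem' := fun ha hb => ha.add hb
  algebraMap_mem' := fun r i j hij => by
    rw [Matrix.algebraMap_eq_diagonal]
    exact Matrix.diagonal_apply_ne _ (ne_of_gt hij)

section LeibnizAtUnit

variable {A : Type*} [Ring A]

theorem map_one_eq_zero_of_leibniz_at_unit {Γ : A} (hΓ : IsUnit Γ) (δ : A → A)
    (h : ∀ S₁ S₂ : A, S₁ * S₂ = 1 → δ Γ = δ (Γ * S₁) * S₂ + Γ * S₁ * δ S₂) :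
    δ 1 = 0 := by
  have h11 := h 1 1 (one_mul 1)
  simp only [mul_one] at h11
  exact hΓ.mul_left_cancel (by rw [mul_zero]; exact left_eq_add.mp h11)

variable {K : Type*} [Field K] [CharZero K] [Algebra K A]

theorem leibniz_of_mul_self_eq_zero {Γ : A} (δ : A →ₗ[K] A) (hδ1 : δ 1 = 0)
    (h : ∀ S₁ S₂ : A, S₁ * S₂ = 1 → δ Γ = δ (Γ * S₁) * S₂ + Γ * S₁ * δ S₂)
    {E : A} (hE : E * E = 0) : δ (Γ * E) = δ Γ * E + Γ * δ E := by
  have e₁ := h (1 + E) (1 - E) (by simp [mul_sub, add_mul, hE])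
  have e₂ := h (1 - E) (1 + E) (by simp [mul_add, sub_mul, hE])
  simp only [mul_add, add_mul, mul_sub, sub_mul, mul_one, map_add, map_sub, mul_assoc, hδ1,
    zero_sub, zero_add, mul_neg] at e₁ e₂
  linear_combination (norm := module) (-(2 : K)⁻¹) • e₁ + (2 : K)⁻¹ • e₂

theorem leibniz_of_isIdempotentElem {Γ : A} (δ : A →ₗ[K] A) (hδ1 : δ 1 = 0)
    (h : ∀ S₁ S₂ : A, S₁ * S₂ = 1 → δ Γ = δ (Γ * S₁) * S₂ + Γ * S₁ * δ S₂)
    {P : A} (hP : IsIdempotentElem P) : δ (Γ * P) = δ Γ * P + Γ * δ P := by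
  have e₁ := h (1 - (P + P)) (1 - (P + P))
    (by simp [mul_add, add_mul, mul_sub, sub_mul, hP.eq]; abel)
  have e₂ := h (1 + P) (1 - (2 : K)⁻¹ • P)
    (by simp [add_mul, mul_sub, hP.eq]; module)
  simp only [mul_add, add_mul, mul_sub, sub_mul, mul_one, map_add, map_sub, map_smul,
    mul_smul_comm, mul_assoc, hδ1, zero_sub, mul_neg, neg_add] at e₁ e₂
  linear_combination (norm := module) (-(6 : K)⁻¹) • e₁ + (-(4 : K) / 3) • e₂

theorem leibniz_of_span_idempotent_or_mul_self_eq_zero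
    (hspan : Submodule.span K {x : A | IsIdempotentElem x ∨ x * x = 0} = ⊤)
    {Γ : A} (δ : A →ₗ[K] A) (hδ1 : δ 1 = 0)
    (h : ∀ S₁ S₂ : A, S₁ * S₂ = 1 → δ Γ = δ (Γ * S₁) * S₂ + Γ * S₁ * δ S₂)
    (R : A) : δ (Γ * R) = δ Γ * R + Γ * δ R := by
  let D : A →ₗ[K] A :=
    δ ∘ₗ LinearMap.mulLeft K Γ - LinearMap.mulLeft K (δ Γ) - LinearMap.mulLeft K Γ ∘ₗ δ
  have hD : ∀ x, D x = 0 ↔ δ (Γ * x) = δ Γ * x + Γ * δ x := fun x => by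
    simp [D, sub_sub, sub_eq_zero]
  have hker : Submodule.span K {x : A | IsIdempotentElem x ∨ x * x = 0} ≤ LinearMap.ker D := by
    refine Submodule.span_le.mpr fun x hx => (hD x).mpr ?_
    rcases hx with hx | hx
    · exact leibniz_of_isIdempotentElem δ hδ1 h hx
    · exact leibniz_of_mul_self_eq_zero δ hδ1 h hx
  rw [hspan, top_le_iff, LinearMap.ker_eq_top] at hker
  exact (hD R).mp (by simp [hker])

end LeibnizAtUnit

theorem upperTriangularAlg_span_idempotent_or_mul_self_eq_zero (n : ℕ) :
    Submodule.span ℂ {x : upperTriangularAlg n | IsIdempotentElem x ∨ x * x = 0} = ⊤ := by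
  set S := {x : upperTriangularAlg n | IsIdempotentElem x ∨ x * x = 0}
  let ι := (upperTriangularAlg n).val.toLinearMap
  have hunit : ∀ i j : Fin n, i ≤ j → Matrix.single i j (1 : ℂ) ∈ ι '' S := fun i j hij => by
    refine ⟨⟨_, Matrix.blockTriangular_single hij 1⟩, ?_, rfl⟩
    rcases hij.eq_or_lt with rfl | hlt
    · exact Or.inl (Subtype.ext (by simp [Matrix.single_mul_single_same]))
    · exact Or.inr (Subtype.ext (Matrix.single_mul_single_of_ne (h := hlt.ne') ..))
  rw [eq_top_iff]
  rintro M -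
  have hM : (M : Matrix (Fin n) (Fin n) ℂ) ∈ Submodule.span ℂ (ι '' S) := by
    rw [Matrix.matrix_eq_sum_single (M : Matrix (Fin n) (Fin n) ℂ)]
    refine Submodule.sum_mem _ fun i _ => Submodule.sum_mem _ fun j _ => ?_
    rcases lt_or_ge j i with hji | hij
    · simp [M.2 hji]
    · rw [← mul_one (M.1 i j), ← smul_eq_mul, ← Matrix.smul_single]
      exact Submodule.smul_mem _ _ (Submodule.subset_span (hunit i j hij))
  rw [← Submodule.map_span] at hM
  obtain ⟨y, hy, hyM⟩ := hM
  rwa [Subtype.val_injective hyM] at hy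

theorem stmt5_general (n : ℕ) (Γ : upperTriangularAlg n) (hΓ : IsUnit Γ)
    (δ : upperTriangularAlg n →ₗ[ℂ] upperTriangularAlg n)
    (h : ∀ S₁ S₂ : upperTriangularAlg n, S₁ * S₂ = 1 →
      δ Γ = δ (Γ * S₁) * S₂ + Γ * S₁ * δ S₂) :
    (∀ S₁ S₂ : upperTriangularAlg n, S₁ * S₂ = 1 → δ S₁ * S₂ + S₁ * δ S₂ = 0) ∧
      δ 1 = 0 := by
  have hδ1 := map_one_eq_zero_of_leibniz_at_unit hΓ δ h
  have hleib := leibniz_of_span_idempotent_or_mul_self_eq_zero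
    (upperTriangularAlg_span_idempotent_or_mul_self_eq_zero n) δ hδ1 h
  refine ⟨fun S₁ S₂ h12 => hΓ.mul_left_cancel ?_, hδ1⟩
  have e := h S₁ S₂ h12
  rw [hleib S₁, add_mul, mul_assoc (δ Γ), h12, mul_one, add_assoc, left_eq_add] at e
  rw [mul_zero, mul_add, ← mul_assoc, ← mul_assoc, e]

/-- Let `A = T(n, ℂ)` (`n ≥ 1`), `Γ` invertible in `A`, and `δ : A → A`
linear with `δ(Γ) = δ(Γ S₁) S₂ + Γ S₁ δ(S₂)` whenever `S₁ S₂ = I`.  Then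
`δ(S₁) S₂ + S₁ δ(S₂) = 0` whenever `S₁ S₂ = I`; in particular `δ(I) = 0`. -/
theorem stmt5 (n : ℕ) (hn : 1 ≤ n) (Γ : upperTriangularAlg n) (hΓ : IsUnit Γ)
    (δ : upperTriangularAlg n →ₗ[ℂ] upperTriangularAlg n)
    (h : ∀ S₁ S₂ : upperTriangularAlg n, S₁ * S₂ = 1 →
      δ Γ = δ (Γ * S₁) * S₂ + Γ * S₁ * δ S₂) :
    (∀ S₁ S₂ : upperTriangularAlg n, S₁ * S₂ = 1 → δ S₁ * S₂ + S₁ * δ S₂ = 0) ∧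
      δ 1 = 0 :=
  stmt5_general n Γ hΓ δ h
end

section
/- Let H and K be complex Hilbert spaces with dim H > 1, and let φ : B(K, H) → B(K, H) be a linear map such that T φ(S) = 0 for every T in B(H) and S in B(K, H) with TS = 0. Then for each x in H and g in K there exists a vector ω in K with φ(x ⊗ g) = x ⊗ ω, where x ⊗ g denotes the rank-one operator y ↦ ⟨y, g⟩x. -/
/-!
Every `T ∈ B(H)` with `T x = 0` annihilates `x ⊗ g`, hence also `φ(x ⊗ g)`. Taking `T = 1 - P`
for the orthogonal projection `P` onto `ℂ x` shows that `φ(x ⊗ g)` has range in `ℂ x`, and an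
operator with range in `ℂ x` is `x ⊗ ω`, where `ω` is the Riesz representative of the functional
`y ↦ ⟨x, φ(x ⊗ g) y⟩ / ‖x‖²`.
-/

section RankOne

variable {𝕜 E F : Type*} [RCLike 𝕜] [NormedAddCommGroup E] [InnerProductSpace 𝕜 E]
  [NormedAddCommGroup F] [InnerProductSpace 𝕜 F]

theorem mem_span_singleton_of_forall_apply_eq_zero {x v : E}
    (h : ∀ T : E →L[𝕜] E, T x = 0 → T v = 0) : v ∈ 𝕜 ∙ x := by
  set P := (𝕜 ∙ x).starProjection
  have hPx : P x = x := Submodule.starProjection_eq_self_iff.2 (Submodule.mem_span_singleton_self x)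
  have hv : (1 - P) v = 0 := h _ (by simp [hPx])
  rw [← Submodule.starProjection_eq_self_iff]
  exact (sub_eq_zero.1 hv).symm

theorem ContinuousLinearMap.comp_smulRight_eq_zero {G : Type*} [NormedAddCommGroup G]
    [NormedSpace 𝕜 G] {T : E →L[𝕜] G} {x : E} (hx : T x = 0) (ℓ : F →L[𝕜] 𝕜) :
    T.comp (ℓ.smulRight x) = 0 := by
  ext y
  simp [hx]

theorem exists_eq_innerSL_smulRight_of_forall_mem_span [CompleteSpace F] {T : F →L[𝕜] E} {x : E}
    (hT : ∀ y, T y ∈ 𝕜 ∙ x) : ∃ ω : F, T = (innerSL 𝕜 ω).smulRight x := by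
  refine ⟨(InnerProductSpace.toDual 𝕜 F).symm
    ((((‖x‖ ^ 2 : ℝ) : 𝕜))⁻¹ • (innerSL 𝕜 x).comp T), ?_⟩
  ext y
  rw [ContinuousLinearMap.smulRight_apply, innerSL_apply_apply,
    InnerProductSpace.toDual_symm_apply, ← Submodule.starProjection_eq_self_iff.2 (hT y),
    Submodule.starProjection_singleton, div_eq_inv_mul]
  rfl

end RankOne

theorem stmt6_general {H K : Type*}
    [NormedAddCommGroup H] [InnerProductSpace ℂ H]
    [NormedAddCommGroup K] [InnerProductSpace ℂ K] [CompleteSpace K]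
    (φ : (K →L[ℂ] H) →ₗ[ℂ] (K →L[ℂ] H))
    (h : ∀ (T : H →L[ℂ] H) (S : K →L[ℂ] H), T.comp S = 0 → T.comp (φ S) = 0) :
    ∀ (x : H) (g : K), ∃ ω : K,
      φ ((innerSL ℂ g).smulRight x) = (innerSL ℂ ω).smulRight x := by
  intro x g
  refine exists_eq_innerSL_smulRight_of_forall_mem_span fun y =>
    mem_span_singleton_of_forall_apply_eq_zero fun T hT => ?_
  have hφ := h T _ (T.comp_smulRight_eq_zero hT (innerSL ℂ g))
  exact congr($hφ y)

/-- If `dim H > 1` and `φ : B(K,H) → B(K,H)` is linear with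
`T φ(S) = 0` whenever `T S = 0` (`T ∈ B(H)`, `S ∈ B(K,H)`), then for each `x ∈ H`,
`g ∈ K` there is `ω ∈ K` with `φ(x ⊗ g) = x ⊗ ω`, where `x ⊗ g : y ↦ ⟨y, g⟩ x`. -/
theorem stmt6 {H K : Type*}
    [NormedAddCommGroup H] [InnerProductSpace ℂ H] [CompleteSpace H]
    [NormedAddCommGroup K] [InnerProductSpace ℂ K] [CompleteSpace K]
    (hdim : 1 < Module.rank ℂ H)
    (φ : (K →L[ℂ] H) →ₗ[ℂ] (K →L[ℂ] H))
    (h : ∀ (T : H →L[ℂ] H) (S : K →L[ℂ] H), T.comp S = 0 → T.comp (φ S) = 0) :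
    ∀ (x : H) (g : K), ∃ ω : K,
      φ ((innerSL ℂ g).smulRight x) = (innerSL ℂ ω).smulRight x :=
  stmt6_general φ h
end

section
/- Let H, K be complex Hilbert spaces with dim H > 1, and let φ : B(K, H) → B(K, H) be a linear map, continuous in the strong operator topology on bounded sets, such that T φ(S) = 0 for all T in B(H), S in B(K, H) with TS = 0. Then there exists D in B(K) such that φ(S) = S D for all S in B(K, H). -/
/-!
Write `x ⊗ y` for `rankOne ℂ x y`. Testing `T φ(S) = 0` against `T = v ⊗ v` shows that `φ(S)`
takes values orthogonal to every `v ⊥ ran S`. Hence `φ(x ⊗ y)` maps into `ℂ x`, so for fixed `y`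
and `u` the linear map `x ↦ φ(x ⊗ y) u` sends every vector to a multiple of itself and is a
scalar: this gives `φ(x ⊗ y) = x ⊗ g y` with `g` linear, bounded by the closed graph theorem and
the continuity of `φ`. With `D = g*` we get `φ(R) = R D` for rank-one `R`. If `S D z = 0` and
`v ≠ 0`, subtracting a rank-one operator from `S` makes its range orthogonal to `v` without
changing `⟪v, φ(S) z⟫`, which is therefore `0`. Finally `S - S D z ⊗ y` with `⟪y, D z⟫ = 1` kills
`D z`, so `φ(S) z = S D z`.
-/

open Filter Topology

open InnerProductSpace ContinuousLinearMap
open scoped InnerProductSpace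

theorem LinearMap.exists_eq_smul_id_of_forall_mem_span_singleton {K V : Type*} [Field K]
    [AddCommGroup V] [Module K V] {f : V →ₗ[K] V} (h : ∀ v, f v ∈ K ∙ v) :
    ∃ a : K, f = a • 1 := by
  refine f.exists_eq_smul_id_of_forall_notLinearIndependent fun v hv => ?_
  obtain ⟨a, ha⟩ := Submodule.mem_span_singleton.mp (h v)
  exact (LinearIndependent.pair_iff' (hv.ne_zero 0)).mp hv a ha

section InnerProductSpace

variable {𝕜 E : Type*} [RCLike 𝕜] [NormedAddCommGroup E] [InnerProductSpace 𝕜 E]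

theorem Submodule.mem_span_singleton_of_forall_inner_eq_zero {w p : E}
    (h : ∀ v, ⟪v, w⟫_𝕜 = 0 → ⟪v, p⟫_𝕜 = 0) : p ∈ 𝕜 ∙ w := by
  rw [← Submodule.orthogonal_orthogonal (𝕜 ∙ w), Submodule.mem_orthogonal]
  intro v hv
  rw [Submodule.mem_orthogonal_singleton_iff_inner_left] at hv
  exact h v hv

theorem exists_inner_eq_one {w : E} (hw : w ≠ 0) : ∃ y : E, ⟪w, y⟫_𝕜 = 1 :=
  ⟨(⟪w, w⟫_𝕜)⁻¹ • w, by rw [inner_smul_right, inv_mul_cancel₀ (inner_self_ne_zero.mpr hw)]⟩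

end InnerProductSpace

section

variable {𝕜 E F : Type*} [RCLike 𝕜] [NormedAddCommGroup E] [InnerProductSpace 𝕜 E]
  [NormedAddCommGroup F] [InnerProductSpace 𝕜 F]

def LeftAnnihilatorPreserving (φ : (F →L[𝕜] E) →ₗ[𝕜] (F →L[𝕜] E)) : Prop :=
  ∀ (T : E →L[𝕜] E) (S : F →L[𝕜] E), T ∘L S = 0 → T ∘L φ S = 0

/-- The paper's continuity in the strong operator topology on bounded sets, in sequential form. -/
def SeqContinuousStrongOnBounded (φ : (F →L[𝕜] E) → (F →L[𝕜] E)) : Prop :=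
  ∀ (S : ℕ → (F →L[𝕜] E)) (S₀ : F →L[𝕜] E), (∃ C : ℝ, ∀ n, ‖S n‖ ≤ C) →
    (∀ y : F, Tendsto (fun n => S n y) atTop (𝓝 (S₀ y))) →
    ∀ y : F, Tendsto (fun n => φ (S n) y) atTop (𝓝 (φ S₀ y))

theorem LinearMap.continuous_of_apply_rankOne_eq [CompleteSpace F]
    {φ : (F →L[𝕜] E) → (F →L[𝕜] E)} (hcont : SeqContinuousStrongOnBounded φ)
    {g : F →ₗ[𝕜] F} {e : E} (he : e ≠ 0) (hg : ∀ y, φ (rankOne 𝕜 e y) = rankOne 𝕜 e (g y)) :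
    Continuous g := by
  refine g.continuous_of_seq_closed_graph fun y y₀ w hy hgy => ext_inner_right 𝕜 fun u => ?_
  have hbdd : ∃ C, ∀ n, ‖rankOne 𝕜 e (y n)‖ ≤ C := by
    obtain ⟨C, hC⟩ := hy.norm.bddAbove_range
    exact ⟨‖e‖ * C, fun n => by rw [norm_rankOne]; gcongr; exact hC ⟨n, rfl⟩⟩
  have hlim := hcont _ (rankOne 𝕜 e y₀) hbdd
    (fun u => by simpa using (hy.inner tendsto_const_nhds).smul_const e) u
  simp only [hg, rankOne_apply] at hlim
  exact smul_left_injective 𝕜 he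
    (tendsto_nhds_unique ((hgy.inner tendsto_const_nhds).smul_const e) hlim)

namespace LeftAnnihilatorPreserving

variable {φ : (F →L[𝕜] E) →ₗ[𝕜] (F →L[𝕜] E)}

theorem inner_apply_eq_zero (hφ : LeftAnnihilatorPreserving φ) {S : F →L[𝕜] E} {v : E}
    (hv : ∀ u, ⟪v, S u⟫_𝕜 = 0) (u : F) : ⟪v, φ S u⟫_𝕜 = 0 := by
  rcases eq_or_ne v 0 with rfl | hv0
  · exact inner_zero_left _
  have hT : rankOne 𝕜 v v ∘L S = 0 := by
    ext u
    simp [hv u]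
  simpa [hv0] using congr($(hφ _ _ hT) u)

theorem apply_rankOne_mem_span (hφ : LeftAnnihilatorPreserving φ) (x : E) (y u : F) :
    φ (rankOne 𝕜 x y) u ∈ 𝕜 ∙ x :=
  Submodule.mem_span_singleton_of_forall_inner_eq_zero fun _ hv =>
    hφ.inner_apply_eq_zero (fun _ => by simp [inner_smul_right, hv]) u

theorem exists_apply_rankOne_eq_smul (hφ : LeftAnnihilatorPreserving φ) (y u : F) :
    ∃ c : 𝕜, ∀ x : E, φ (rankOne 𝕜 x y) u = c • x := by
  let f : E →ₗ[𝕜] E :=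
    { toFun := fun x => φ (rankOne 𝕜 x y) u
      map_add' := by simp
      map_smul' := by simp }
  obtain ⟨c, hc⟩ := f.exists_eq_smul_id_of_forall_mem_span_singleton
    (hφ.apply_rankOne_mem_span · y u)
  exact ⟨c, fun x => congr($hc x)⟩

variable [CompleteSpace E] [CompleteSpace F]

theorem apply_rankOne_eq (hφ : LeftAnnihilatorPreserving φ) {e : E} (he : ‖e‖ = 1)
    (x : E) (y : F) : φ (rankOne 𝕜 x y) = rankOne 𝕜 x (adjoint (φ (rankOne 𝕜 e y)) e) := by
  ext u
  obtain ⟨c, hc⟩ := hφ.exists_apply_rankOne_eq_smul y u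
  rw [hc, rankOne_apply, adjoint_inner_left, hc, inner_smul_right, inner_self_eq_norm_sq_to_K,
    he]
  simp

theorem exists_apply_rankOne_eq_comp (hφ : LeftAnnihilatorPreserving φ)
    (hcont : SeqContinuousStrongOnBounded φ) :
    ∃ D : F →L[𝕜] F, ∀ (x : E) (y : F), φ (rankOne 𝕜 x y) = rankOne 𝕜 x y ∘L D := by
  rcases subsingleton_or_nontrivial E with _ | _
  · exact ⟨0, fun _ _ => Subsingleton.elim _ _⟩
  obtain ⟨e₀, he₀⟩ := exists_ne (0 : E)
  obtain ⟨e, he⟩ : ∃ e : E, ‖e‖ = 1 := ⟨_, norm_smul_inv_norm (𝕜 := 𝕜) he₀⟩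
  -- `y ↦ φ (rankOne 𝕜 e y)` and `adjoint` are both conjugate-linear, so `g` is linear.
  let g : F →ₗ[𝕜] F := (ContinuousLinearMap.apply 𝕜 F e).toLinearMap ∘ₛₗ
    (adjoint (𝕜 := 𝕜) (E := F) (F := E)).toLinearMap ∘ₛₗ φ ∘ₛₗ (rankOne 𝕜 e).toLinearMap
  have hg (x : E) (y : F) : φ (rankOne 𝕜 x y) = rankOne 𝕜 x (g y) := hφ.apply_rankOne_eq he x y
  have g_cont : Continuous g :=
    LinearMap.continuous_of_apply_rankOne_eq hcont (by rintro rfl; simp at he) (hg e)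
  refine ⟨adjoint ⟨g, g_cont⟩, fun x y => ?_⟩
  rw [rankOne_comp, adjoint_adjoint]
  exact hg x y

variable {D : F →L[𝕜] F}

theorem apply_eq_zero_of_comp_apply_eq_zero (hφ : LeftAnnihilatorPreserving φ)
    (hD : ∀ (x : E) (y : F), φ (rankOne 𝕜 x y) = rankOne 𝕜 x y ∘L D) {S : F →L[𝕜] E} {z : F}
    (hSz : (S ∘L D) z = 0) : φ S z = 0 := by
  refine ext_inner_left 𝕜 fun v => ?_
  rw [inner_zero_right]
  rcases eq_or_ne v 0 with rfl | hv
  · exact inner_zero_left _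
  obtain ⟨x, hx⟩ := exists_inner_eq_one (𝕜 := 𝕜) hv
  have hS' : ∀ u, ⟪v, (S - rankOne 𝕜 x (adjoint S v)) u⟫_𝕜 = 0 := fun u => by
    simp [inner_sub_right, inner_smul_right, adjoint_inner_left, hx]
  have := hφ.inner_apply_eq_zero hS' z
  rwa [map_sub, sub_apply, hD, comp_apply, rankOne_apply, adjoint_inner_left, ← comp_apply, hSz,
    inner_zero_right, zero_smul, inner_sub_right, inner_zero_right, sub_zero] at this

theorem eq_comp_of_apply_rankOne_eq_comp (hφ : LeftAnnihilatorPreserving φ)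
    (hD : ∀ (x : E) (y : F), φ (rankOne 𝕜 x y) = rankOne 𝕜 x y ∘L D) (S : F →L[𝕜] E) :
    φ S = S ∘L D := by
  ext z
  rcases eq_or_ne ((S ∘L D) z) 0 with hSz | hSz
  · rw [hSz]
    exact hφ.apply_eq_zero_of_comp_apply_eq_zero hD hSz
  obtain ⟨y, hy⟩ := exists_inner_eq_one (𝕜 := 𝕜) fun hz : D z = 0 => hSz (by simp [hz])
  replace hy : ⟪y, D z⟫_𝕜 = 1 := by rw [← inner_conj_symm, hy, map_one]
  have h0 := hφ.apply_eq_zero_of_comp_apply_eq_zero hD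
    (S := S - rankOne 𝕜 ((S ∘L D) z) y) (z := z) (by simp [hy])
  rwa [map_sub, sub_apply, hD, comp_apply, rankOne_apply, hy, one_smul, sub_eq_zero] at h0

end LeftAnnihilatorPreserving

end

theorem stmt9_general {H K : Type*}
    [NormedAddCommGroup H] [InnerProductSpace ℂ H] [CompleteSpace H]
    [NormedAddCommGroup K] [InnerProductSpace ℂ K] [CompleteSpace K]
    (φ : (K →L[ℂ] H) →ₗ[ℂ] (K →L[ℂ] H))
    (hcont : ∀ (S : ℕ → (K →L[ℂ] H)) (S₀ : K →L[ℂ] H), (∃ C : ℝ, ∀ n, ‖S n‖ ≤ C) →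
      (∀ y : K, Tendsto (fun n => S n y) atTop (𝓝 (S₀ y))) →
      ∀ y : K, Tendsto (fun n => φ (S n) y) atTop (𝓝 (φ S₀ y)))
    (h : ∀ (T : H →L[ℂ] H) (S : K →L[ℂ] H), T.comp S = 0 → T.comp (φ S) = 0) :
    ∃ D : K →L[ℂ] K, ∀ S : K →L[ℂ] H, φ S = S.comp D := by
  obtain ⟨D, hD⟩ := LeftAnnihilatorPreserving.exists_apply_rankOne_eq_comp h hcont
  exact ⟨D, LeftAnnihilatorPreserving.eq_comp_of_apply_rankOne_eq_comp h hD⟩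

/-- If `dim H > 1` and `φ : B(K,H) → B(K,H)` is linear, continuous in the
strong operator topology on bounded sets, and `T φ(S) = 0` whenever `T S = 0`
(`T ∈ B(H)`), then there is `D ∈ B(K)` with `φ(S) = S D` for all `S`. -/
theorem stmt9 {H K : Type*}
    [NormedAddCommGroup H] [InnerProductSpace ℂ H] [CompleteSpace H]
    [NormedAddCommGroup K] [InnerProductSpace ℂ K] [CompleteSpace K]
    (hdim : 1 < Module.rank ℂ H)
    (φ : (K →L[ℂ] H) →ₗ[ℂ] (K →L[ℂ] H))
    (hcont : ∀ (S : ℕ → (K →L[ℂ] H)) (S₀ : K →L[ℂ] H), (∃ C : ℝ, ∀ n, ‖S n‖ ≤ C) →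
      (∀ y : K, Tendsto (fun n => S n y) atTop (𝓝 (S₀ y))) →
      ∀ y : K, Tendsto (fun n => φ (S n) y) atTop (𝓝 (φ S₀ y)))
    (h : ∀ (T : H →L[ℂ] H) (S : K →L[ℂ] H), T.comp S = 0 → T.comp (φ S) = 0) :
    ∃ D : K →L[ℂ] K, ∀ S : K →L[ℂ] H, φ S = S.comp D :=
  stmt9_general φ hcont h
end

section
/- Let H, K be complex Hilbert spaces with dim K > 1, and let φ : B(K, H) → B(K, H) be a linear map, SOT-continuous, such that φ(S) T = 0 for all T in B(K) and S in B(K, H) with ST = 0. Then there exists D' in B(H) such that φ(S) = D' S for all S in B(K, H). -/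
/-!
Testing the hypothesis on the rank-one operators `T = f.smulRight e` with `f e = 1` shows that
`φ S e = 0` whenever `S e = 0`. Hence `φ S y` depends only on the vector `S y`, and comparing
with a rank-one operator built from a functional that is nonzero at both points shows that it
does not depend on the point `y` either. So `φ S y = D (S y)` with `D x = φ (g.smulRight x) e₀`,
and `D` is continuous because `φ` is sequentially continuous for the strong operator topology.
-/

open Filter Topology

def PreservesLeftAnnihilators {R K H : Type*} [CommSemiring R]
    [AddCommMonoid K] [TopologicalSpace K] [Module R K]
    [AddCommMonoid H] [TopologicalSpace H] [Module R H] [ContinuousAdd H] [ContinuousConstSMul R H]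
    (φ : (K →L[R] H) →ₗ[R] (K →L[R] H)) : Prop :=
  ∀ (S : K →L[R] H) (T : K →L[R] K), S.comp T = 0 → (φ S).comp T = 0

namespace PreservesLeftAnnihilators

variable {R K H : Type*} [Field R] [TopologicalSpace R] [IsTopologicalRing R]
  [AddCommGroup K] [TopologicalSpace K] [Module R K] [ContinuousSMul R K] [SeparatingDual R K]
  [AddCommGroup H] [TopologicalSpace H] [IsTopologicalAddGroup H] [Module R H] [ContinuousSMul R H]
  {φ : (K →L[R] H) →ₗ[R] (K →L[R] H)}

theorem apply_eq_zero (hφ : PreservesLeftAnnihilators φ) {S : K →L[R] H} {e : K}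
    (hS : S e = 0) : φ S e = 0 := by
  rcases eq_or_ne e 0 with rfl | he
  · exact map_zero _
  obtain ⟨f, hf⟩ := SeparatingDual.exists_eq_one (R := R) he
  have hST : S.comp (f.smulRight e) = 0 := by ext x; simp [hS]
  simpa [hf] using DFunLike.congr_fun (hφ S _ hST) e

theorem apply_eq_apply (hφ : PreservesLeftAnnihilators φ) {S S' : K →L[R] H} {e : K}
    (h : S e = S' e) : φ S e = φ S' e := by
  simpa [sub_eq_zero] using hφ.apply_eq_zero (S := S - S') (by simpa [sub_eq_zero] using h)

theorem apply_smulRight (hφ : PreservesLeftAnnihilators φ) {f : K →L[R] R} {e : K}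
    (hf : f e = 1) (x : H) (v : K) :
    φ (f.smulRight x) v = f v • φ (f.smulRight x) e := by
  simpa [sub_eq_zero] using
    hφ.apply_eq_zero (S := f.smulRight x) (e := v - f v • e) (by simp [hf])

theorem apply_eq_apply_of_apply_eq (hφ : PreservesLeftAnnihilators φ) {S S' : K →L[R] H}
    {y e : K} (h : S y = S' e) : φ S y = φ S' e := by
  rcases eq_or_ne e 0 with rfl | he
  · simpa using hφ.apply_eq_zero (h.trans (map_zero S'))
  rcases eq_or_ne y 0 with rfl | hy
  · simpa using (hφ.apply_eq_zero (h.symm.trans (map_zero S))).symm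
  obtain ⟨f, hfe, hfy⟩ := SeparatingDual.exists_eq_one_ne_zero_of_ne_zero_pair (R := R) he hy
  set P := f.smulRight (S' e)
  apply smul_right_injective H hfy
  calc f y • φ S y = φ (f y • S) y := by simp
    _ = φ P y := hφ.apply_eq_apply (by simp [P, h])
    _ = f y • φ P e := hφ.apply_smulRight hfe _ _
    _ = f y • φ S' e := by rw [hφ.apply_eq_apply (S' := S') (by simp [P, hfe])]

theorem exists_eq_comp [Nontrivial K] [SequentialSpace H] (hφ : PreservesLeftAnnihilators φ)
    (hcont : ∀ (S : ℕ → (K →L[R] H)) (S₀ : K →L[R] H),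
      (∀ y : K, Tendsto (fun n => S n y) atTop (𝓝 (S₀ y))) →
      ∀ y : K, Tendsto (fun n => φ (S n) y) atTop (𝓝 (φ S₀ y))) :
    ∃ D : H →L[R] H, ∀ S : K →L[R] H, φ S = D.comp S := by
  obtain ⟨e, he⟩ := exists_ne (0 : K)
  obtain ⟨g, hg⟩ := SeparatingDual.exists_eq_one (R := R) he
  let D : H →ₗ[R] H :=
    { toFun x := φ (g.smulRightₗ (T := R) x) e
      map_add' x y := by simp only [map_add, add_apply]
      map_smul' c x := by simp only [map_smul, smul_apply, RingHom.id_apply] }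
  have hD : Continuous D := continuous_iff_seqContinuous.2 fun u x hu ↦
    hcont _ _ (fun y ↦ by simpa using hu.const_smul (g y)) e
  refine ⟨⟨D, hD⟩, fun S ↦ ?_⟩
  ext y
  exact hφ.apply_eq_apply_of_apply_eq (by simp [hg])

end PreservesLeftAnnihilators

theorem stmt10_general {H K : Type*}
    [NormedAddCommGroup H] [InnerProductSpace ℂ H]
    [NormedAddCommGroup K] [InnerProductSpace ℂ K]
    (φ : (K →L[ℂ] H) →ₗ[ℂ] (K →L[ℂ] H))
    (hcont : ∀ (S : ℕ → (K →L[ℂ] H)) (S₀ : K →L[ℂ] H),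
      (∀ y : K, Tendsto (fun n => S n y) atTop (𝓝 (S₀ y))) →
      ∀ y : K, Tendsto (fun n => φ (S n) y) atTop (𝓝 (φ S₀ y)))
    (h : ∀ (S : K →L[ℂ] H) (T : K →L[ℂ] K), S.comp T = 0 → (φ S).comp T = 0) :
    ∃ D' : H →L[ℂ] H, ∀ S : K →L[ℂ] H, φ S = D'.comp S := by
  rcases subsingleton_or_nontrivial K with _ | _
  · refine ⟨0, fun S ↦ ?_⟩
    ext y
    simp [Subsingleton.elim y 0]
  · exact PreservesLeftAnnihilators.exists_eq_comp h hcont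

/-- If `dim K > 1` and `φ : B(K,H) → B(K,H)` is linear, SOT-continuous,
and `φ(S) T = 0` whenever `S T = 0` (`T ∈ B(K)`), then there is `D' ∈ B(H)` with
`φ(S) = D' S` for all `S`. -/
theorem stmt10 {H K : Type*}
    [NormedAddCommGroup H] [InnerProductSpace ℂ H] [CompleteSpace H]
    [NormedAddCommGroup K] [InnerProductSpace ℂ K] [CompleteSpace K]
    (hdim : 1 < Module.rank ℂ K)
    (φ : (K →L[ℂ] H) →ₗ[ℂ] (K →L[ℂ] H))
    (hcont : ∀ (S : ℕ → (K →L[ℂ] H)) (S₀ : K →L[ℂ] H),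
      (∀ y : K, Tendsto (fun n => S n y) atTop (𝓝 (S₀ y))) →
      ∀ y : K, Tendsto (fun n => φ (S n) y) atTop (𝓝 (φ S₀ y)))
    (h : ∀ (S : K →L[ℂ] H) (T : K →L[ℂ] K), S.comp T = 0 → (φ S).comp T = 0) :
    ∃ D' : H →L[ℂ] H, ∀ S : K →L[ℂ] H, φ S = D'.comp S :=
  stmt10_general φ hcont h
end

section
/- Let n ≥ 2 and let A = T(n, ℂ) be the algebra of upper triangular n×n complex matrices. Suppose δ : A → A is a linear map with δ(I) = 0 satisfying δ(S₁)S₂ + S₁δ(S₂) = 0 for all S₁, S₂ in A with S₁S₂ = I. Then for every idempotent P in A, δ(P) = δ(P)P + Pδ(P). -/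
theorem IsIdempotentElem.one_sub_two_smul_mul_self {R A : Type*} [CommRing R] [Ring A]
    [Algebra R A] {P : A} (hP : IsIdempotentElem P) :
    (1 - (2 : R) • P) * (1 - (2 : R) • P) = 1 := by
  simp only [sub_mul, mul_sub, one_mul, mul_one, smul_mul_smul_comm, hP.eq]
  module

namespace LinearMap

variable {R A : Type*} [CommRing R] [Invertible (2 : R)] [Ring A] [Algebra R A]
  {δ : A →ₗ[R] A}

theorem map_one_eq_zero_of_forall_mul_eq_one
    (h : ∀ S₁ S₂ : A, S₁ * S₂ = 1 → δ S₁ * S₂ + S₁ * δ S₂ = 0) : δ 1 = 0 := by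
  have h2 : (2 : R) • δ 1 = 0 := by
    simpa only [mul_one, one_mul, ← two_smul R] using h 1 1 (mul_one 1)
  exact (isUnit_of_invertible (2 : R)).smul_eq_zero.mp h2

theorem leibniz_of_isIdempotentElem
    (h : ∀ S₁ S₂ : A, S₁ * S₂ = 1 → δ S₁ * S₂ + S₁ * δ S₂ = 0) {P : A}
    (hP : IsIdempotentElem P) : δ P = δ P * P + P * δ P := by
  have hS := h _ _ (hP.one_sub_two_smul_mul_self (R := R))
  rw [map_sub, map_one_eq_zero_of_forall_mul_eq_one h, zero_sub, map_smul] at hS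
  have h4 : ((2 : R) * 2) • (δ P * P + P * δ P - δ P) = 0 := by
    rw [← hS]
    simp only [neg_mul, mul_neg, sub_mul, mul_sub, one_mul, mul_one, smul_mul_assoc,
      mul_smul_comm]
    module
  have h2 := isUnit_of_invertible (2 : R)
  exact (sub_eq_zero.mp ((h2.mul h2).smul_eq_zero.mp h4)).symm

end LinearMap

theorem stmt11_general (n : ℕ)
    (δ : upperTriangularAlg n →ₗ[ℂ] upperTriangularAlg n)
    (h : ∀ S₁ S₂ : upperTriangularAlg n, S₁ * S₂ = 1 → δ S₁ * S₂ + S₁ * δ S₂ = 0) :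
    ∀ P : upperTriangularAlg n, P * P = P → δ P = δ P * P + P * δ P :=
  fun _ hP => δ.leibniz_of_isIdempotentElem h hP

/-- For `n ≥ 2` and `A = T(n, ℂ)`, if `δ : A → A` is linear with
`δ(I) = 0` and `δ(S₁) S₂ + S₁ δ(S₂) = 0` whenever `S₁ S₂ = I`, then for every
idempotent `P` in `A` we have `δ(P) = δ(P) P + P δ(P)`. -/
theorem stmt11 (n : ℕ) (hn : 2 ≤ n)
    (δ : upperTriangularAlg n →ₗ[ℂ] upperTriangularAlg n) (hI : δ 1 = 0)
    (h : ∀ S₁ S₂ : upperTriangularAlg n, S₁ * S₂ = 1 → δ S₁ * S₂ + S₁ * δ S₂ = 0) :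
    ∀ P : upperTriangularAlg n, P * P = P → δ P = δ P * P + P * δ P :=
  stmt11_general n δ h
end

section
/- Let n ≥ 2, let A = T(n, ℂ) be the upper triangular n×n matrices, and fix an invertible W ∈ A. Let Ω = W (so Ω is an invertible element of A). If φ : A → A is a linear map satisfying φ(S)T + Sφ(T) = φ(Ω) for all S, T ∈ A with ST = Ω, then φ is an inner derivation: there exists G ∈ Matₙ(ℂ) with φ(X) = XG − GX for all X ∈ A, and moreover G can be chosen in A. -/
/-!
Testing the hypothesis on the factorisations `W = (W u⁻¹) u` with `u = 1 + t x`, where `x` is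
idempotent or cubes to zero (so that `u⁻¹` is polynomial in `x`), and comparing coefficients in
`t` gives `φ (W x) = φ W x + W φ x` on the matrix units, hence everywhere. Cancelling `W`, `φ` is
derivable at `1`, and the same test yields `φ (x²) = φ x x + x φ x` for such `x`. Polarising over
pairs of matrix units whose sum is again idempotent or cube-zero: the diagonal units force
`φ eᵢ = eᵢ G - G eᵢ` with `G = ∑ eᵢ φ eᵢ`, and once this inner derivation is subtracted, `φ` maps
`Eᵢⱼ` to `cᵢⱼ Eᵢⱼ` with `cᵢₖ = cᵢⱼ + cⱼₖ`, which is the inner derivation of a diagonal matrix.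
-/

section Jordan

variable {R : Type*}

theorem map_mul_add_mul_of_map_mul_self [NonUnitalNonAssocRing R] {F : Type*} [FunLike F R R]
    [AddHomClass F R R] (φ : F) {x y : R} (hx : φ (x * x) = φ x * x + x * φ x)
    (hy : φ (y * y) = φ y * y + y * φ y)
    (hxy : φ ((x + y) * (x + y)) = φ (x + y) * (x + y) + (x + y) * φ (x + y)) :
    φ (x * y + y * x) = φ x * y + x * φ y + φ y * x + y * φ x := by
  simp only [add_mul, mul_add, map_add] at hxy
  rw [hx, hy] at hxy
  rw [map_add]
  linear_combination (norm := abel) hxy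

theorem CompleteOrthogonalIdempotents.eq_mul_sub_mul [Ring R] {ι : Type*} [Fintype ι]
    [DecidableEq ι] {e : ι → R} (he : CompleteOrthogonalIdempotents e) {d : ι → R}
    (hd : ∀ i, d i = d i * e i + e i * d i)
    (hd' : ∀ i j, i ≠ j → d i * e j + e i * d j + d j * e i + e j * d i = 0) (j : ι) :
    d j = e j * ∑ i, e i * d i - (∑ i, e i * d i) * e j := by
  have hdiag : ∀ i, e i * d i * e i = 0 := fun i => by
    have := congrArg (fun x => e i * x * e i) (hd i)
    simp only [mul_add, add_mul, mul_assoc, (he.idem i).eq] at this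
    simp only [← mul_assoc, (he.idem i).eq] at this
    exact left_eq_add.mp this
  have hcross : ∀ i, e i * d i * e j = -(e i * d j * e j) := fun i => by
    rcases eq_or_ne i j with rfl | hij
    · rw [hdiag, neg_zero]
    · have h := congrArg (e i * · * e j) (hd' i j hij)
      have expand : e i * (d i * e j + e i * d j + d j * e i + e j * d i) * e j
          = e i * d i * (e j * e j) + e i * e i * d j * e j + e i * d j * (e i * e j)
            + e i * e j * d i * e j := by
        noncomm_ring
      simp only [expand, (he.idem i).eq, (he.idem j).eq, he.ortho hij, mul_zero, zero_mul,
        add_zero] at h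
      exact eq_neg_of_add_eq_zero_left h
  have hleft : e j * ∑ i, e i * d i = e j * d j := by
    rw [Finset.mul_sum, Finset.sum_eq_single j]
    · rw [← mul_assoc, (he.idem j).eq]
    · intro i _ hij
      rw [← mul_assoc, he.ortho hij.symm, zero_mul]
    · simp
  have hright : (∑ i, e i * d i) * e j = -(d j * e j) := by
    simp only [Finset.sum_mul, hcross, Finset.sum_neg_distrib, mul_assoc]
    rw [← Finset.sum_mul, he.complete, one_mul]
  rw [hleft, hright, sub_neg_eq_add, add_comm]
  exact hd j

end Jordan

namespace Matrix

theorem eq_single_of_single_mul_add_mul_single {ι R : Type*} [Fintype ι] [DecidableEq ι]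
    [LinearOrder ι] [Ring R] {M : Matrix ι ι R} (hM : M.BlockTriangular id) {i j : ι} (hij : i < j)
    (hi : single i i 1 * M + M * single i i 1 = M) (hj : single j j 1 * M + M * single j j 1 = M) :
    M = single i j (M i j) := by
  have entry : ∀ a k l, ((single a a (1 : R) * M + M * single a a 1 : Matrix ι ι R) k l)
      = (if k = a then M k l else 0) + (if l = a then M k l else 0) := by
    intro a k l
    rw [add_apply]
    congr 1
    · by_cases hk : k = a
      · subst hk; simp [single_mul_apply_same]
      · simp [single_mul_apply_of_ne (h := hk), hk]
    · by_cases hl : l = a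
      · subst hl; simp [mul_single_apply_same]
      · simp [mul_single_apply_of_ne (hbj := hl), hl]
  ext k l
  have hi' := entry i k l
  have hj' := entry j k l
  rw [hi] at hi'
  rw [hj] at hj'
  rw [single_apply]
  split_ifs with h
  · rw [h.1, h.2]
  · by_cases hlk : l < k
    · exact hM hlk
    · grind

end Matrix

section Derivable

variable {K A : Type*} [Field K] [Ring A] [Algebra K A]

def IsDerivableAt (φ : A →ₗ[K] A) (Ω : A) : Prop :=
  ∀ S T, S * T = Ω → φ S * T + S * φ T = φ Ω

theorem isDerivableAt_mulRight_sub_mulLeft (G Ω : A) :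
    IsDerivableAt (LinearMap.mulRight K G - LinearMap.mulLeft K G) Ω := by
  intro S T hST
  simp only [LinearMap.sub_apply, LinearMap.mulRight_apply, LinearMap.mulLeft_apply, ← hST]
  noncomm_ring

namespace IsDerivableAt

variable {φ ψ : A →ₗ[K] A} {W : A}

theorem sub (hφ : IsDerivableAt φ W) (hψ : IsDerivableAt ψ W) : IsDerivableAt (φ - ψ) W := by
  intro S T hST
  simp only [LinearMap.sub_apply, sub_mul, mul_sub, ← hφ S T hST, ← hψ S T hST]
  abel

theorem map_one (h : IsDerivableAt φ W) (hW : IsLeftRegular W) : φ 1 = 0 :=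
  hW <| by simpa using h W 1 (mul_one W)

theorem one_of_map_mul_eq (h : IsDerivableAt φ W) (hW : IsLeftRegular W)
    (hleib : ∀ X, φ (W * X) = φ W * X + W * φ X) : IsDerivableAt φ 1 := by
  intro S T hST
  rw [h.map_one hW]
  apply hW
  show W * _ = W * 0
  have := h (W * S) T (by rw [mul_assoc, hST, mul_one])
  rw [hleib, add_mul, mul_assoc, hST, mul_one, add_assoc, add_eq_left, mul_assoc, mul_assoc,
    ← mul_add] at this
  rw [this, mul_zero]

variable [CharZero K]

theorem map_mul_of_isIdempotentElem (h : IsDerivableAt φ W) (h1 : φ 1 = 0) {e : A}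
    (he : IsIdempotentElem e) :
    φ (W * e) = φ W * e + W * φ e ∧ φ (W * e) * e + W * e * φ e = φ (W * e) := by
  have at_pair : ∀ s t : K, t - s - s * t = 0 →
      t • (φ W * e + W * φ e) - s • φ (W * e) - (s * t) • (φ (W * e) * e + W * e * φ e) = 0 := by
    intro s t hst
    have hinv : (1 - s • e) * (1 + t • e) = 1 := by
      have : (1 - s • e) * (1 + t • e) = 1 + (t - s - s * t) • e := by
        simp only [sub_mul, mul_add, mul_one, one_mul, smul_mul_smul_comm, he.eq]
        module
      rw [this, hst, zero_smul, add_zero]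
    have := h (W * (1 - s • e)) (1 + t • e) (by rw [mul_assoc, hinv, mul_one])
    simp only [mul_sub, mul_add, mul_one, map_add, map_sub, map_smul, h1, mul_smul_comm,
      smul_mul_assoc, sub_mul, smul_sub, smul_smul, mul_zero] at this
    linear_combination (norm := module) this
  have h₁ := at_pair (-1) (-1 / 2) (by norm_num)
  have h₂ := at_pair 2 (-2) (by norm_num)
  constructor
  · linear_combination (norm := module) (4 / 3 : K) • h₁ + (1 / 6 : K) • h₂
  · linear_combination (norm := module) (-2 / 3 : K) • h₁ + (1 / 6 : K) • h₂

theorem map_mul_of_mul_mul_self_eq_zero (h : IsDerivableAt φ W) (h1 : φ 1 = 0)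
    {x : A} (hx : x * x * x = 0) :
    φ (W * x) = φ W * x + W * φ x ∧ φ (W * x * x) = φ (W * x) * x + W * x * φ x := by
  have at_pair : ∀ t : K,
      t • (φ W * x + W * φ x - φ (W * x)) + (t * t) • (φ (W * x * x) - φ (W * x) * x - W * x * φ x)
        + (t * t * t) • (φ (W * x * x) * x + W * x * x * φ x) = 0 := by
    intro t
    have hinv : (1 - t • x + (t * t) • (x * x)) * (1 + t • x) = 1 := by
      simp only [add_mul, sub_mul, mul_add, mul_one, one_mul, smul_mul_assoc, mul_smul_comm, hx,
        smul_zero]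
      module
    have := h (W * (1 - t • x + (t * t) • (x * x))) (1 + t • x) (by rw [mul_assoc, hinv, mul_one])
    simp only [mul_sub, mul_add, mul_one, map_add, map_sub, map_smul, h1, mul_smul_comm,
      smul_mul_assoc, sub_mul, add_mul, smul_add, smul_sub, smul_smul, zero_add,
      ← mul_assoc] at this
    linear_combination (norm := module) this
  have h₁ := at_pair 1
  have h₂ := at_pair (-1)
  have h₃ := at_pair 2
  constructor
  · linear_combination (norm := module) -h₁ + (1 / 3 : K) • h₂ + (1 / 6 : K) • h₃
  · linear_combination (norm := module) (1 / 2 : K) • h₁ + (1 / 2 : K) • h₂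

theorem map_mul_left (h : IsDerivableAt φ W) (h1 : φ 1 = 0) {x : A}
    (hx : IsIdempotentElem x ∨ x * x * x = 0) : φ (W * x) = φ W * x + W * φ x := by
  rcases hx with hx | hx
  · exact (h.map_mul_of_isIdempotentElem h1 hx).1
  · exact (h.map_mul_of_mul_mul_self_eq_zero h1 hx).1

theorem map_mul_self (h : IsDerivableAt φ 1) {x : A} (hx : IsIdempotentElem x ∨ x * x * x = 0) :
    φ (x * x) = φ x * x + x * φ x := by
  have h1 := h.map_one isRegular_one.left
  rcases hx with hx | hx
  · have := (h.map_mul_of_isIdempotentElem h1 hx).2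
    simp only [one_mul] at this
    rw [hx.eq, this]
  · simpa using (h.map_mul_of_mul_mul_self_eq_zero h1 hx).2

theorem map_mul_add_mul (h : IsDerivableAt φ 1) {x y : A}
    (hx : IsIdempotentElem x ∨ x * x * x = 0) (hy : IsIdempotentElem y ∨ y * y * y = 0)
    (hxy : IsIdempotentElem (x + y) ∨ (x + y) * (x + y) * (x + y) = 0) :
    φ (x * y + y * x) = φ x * y + x * φ y + φ y * x + y * φ x :=
  map_mul_add_mul_of_map_mul_self φ (h.map_mul_self hx) (h.map_mul_self hy) (h.map_mul_self hxy)

theorem exists_map_eq_mul_sub_mul (h : IsDerivableAt φ 1) {ι : Type*} [Fintype ι]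
    [DecidableEq ι] {e : ι → A} (he : CompleteOrthogonalIdempotents e) :
    ∃ G : A, ∀ i, φ (e i) = e i * G - G * e i := by
  refine ⟨_, he.eq_mul_sub_mul (d := fun i => φ (e i)) (fun i => ?_) (fun i j hij => ?_)⟩
  · rw [← h.map_mul_self (.inl (he.idem i)), (he.idem i).eq]
  · have hsum : e i * e j + e j * e i = 0 := by rw [he.ortho hij, he.ortho hij.symm, add_zero]
    have := h.map_mul_add_mul (.inl (he.idem i)) (.inl (he.idem j))
      (.inl ((he.idem i).add (he.idem j) hsum))
    rw [hsum, map_zero] at this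
    exact this.symm

end IsDerivableAt

end Derivable

namespace upperTriangularAlg

open Matrix

variable {n : ℕ}

theorem single_mem {i j : Fin n} (hij : i ≤ j) (c : ℂ) : single i j c ∈ upperTriangularAlg n := by
  intro k l hlk
  refine single_apply_of_ne _ _ _ _ _ ?_
  rintro ⟨rfl, rfl⟩
  exact absurd hij (not_le.mpr hlk)

theorem diagonal_mem (d : Fin n → ℂ) : diagonal d ∈ upperTriangularAlg n :=
  blockTriangular_diagonal d

def matrixUnit (i j : Fin n) (hij : i ≤ j) : upperTriangularAlg n :=
  ⟨single i j 1, single_mem hij 1⟩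

@[simp]
theorem coe_matrixUnit {i j : Fin n} (hij : i ≤ j) :
    (matrixUnit i j hij : Matrix (Fin n) (Fin n) ℂ) = single i j 1 :=
  rfl

theorem matrixUnit_mul_matrixUnit {i j k : Fin n} (hij : i ≤ j) (hjk : j ≤ k) :
    matrixUnit i j hij * matrixUnit j k hjk = matrixUnit i k (hij.trans hjk) :=
  Subtype.ext <| by simp

theorem matrixUnit_mul_matrixUnit_of_ne {i j k l : Fin n} (hij : i ≤ j) (hkl : k ≤ l)
    (hjk : j ≠ k) :
    matrixUnit i j hij * matrixUnit k l hkl = 0 :=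
  Subtype.ext <| by simp [single_mul_single_of_ne _ _ _ _ hjk]

theorem isIdempotentElem_or_mul_mul_self_eq_zero_matrixUnit {i j : Fin n} (hij : i ≤ j) :
    IsIdempotentElem (matrixUnit i j hij) ∨
      matrixUnit i j hij * matrixUnit i j hij * matrixUnit i j hij = 0 := by
  rcases hij.eq_or_lt with rfl | hlt
  · exact .inl (matrixUnit_mul_matrixUnit le_rfl le_rfl)
  · exact .inr (by rw [matrixUnit_mul_matrixUnit_of_ne hij hij hlt.ne', zero_mul])

theorem completeOrthogonalIdempotents_matrixUnit :
    CompleteOrthogonalIdempotents fun i : Fin n => matrixUnit i i le_rfl where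
  idem _ := matrixUnit_mul_matrixUnit le_rfl le_rfl
  ortho _ _ hij := matrixUnit_mul_matrixUnit_of_ne le_rfl le_rfl hij
  complete := Subtype.ext <| by simp [sum_single_one]

theorem eq_sum_matrixUnit (X : upperTriangularAlg n) :
    X = ∑ i, ∑ j, if hij : i ≤ j then (X : Matrix (Fin n) (Fin n) ℂ) i j • matrixUnit i j hij
      else 0 := by
  apply Subtype.ext
  push_cast
  nth_rewrite 1 [matrix_eq_sum_single (X : Matrix (Fin n) (Fin n) ℂ)]
  refine Finset.sum_congr rfl fun i _ => Finset.sum_congr rfl fun j _ => ?_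
  split_ifs with hij
  · simp [smul_single]
  · simp [X.2 (not_le.mp hij)]

theorem linearMap_ext {M : Type*} [AddCommGroup M] [Module ℂ M]
    {f g : upperTriangularAlg n →ₗ[ℂ] M}
    (h : ∀ i j (hij : i ≤ j), f (matrixUnit i j hij) = g (matrixUnit i j hij)) : f = g := by
  ext X
  rw [eq_sum_matrixUnit X]
  simp only [map_sum]
  refine Finset.sum_congr rfl fun i _ => Finset.sum_congr rfl fun j _ => ?_
  split_ifs with hij
  · rw [map_smul, map_smul, h]
  · simp

variable {D : upperTriangularAlg n →ₗ[ℂ] upperTriangularAlg n}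

theorem coe_map_matrixUnit_eq_single (hD : IsDerivableAt D 1)
    (hdiag : ∀ i, D (matrixUnit i i le_rfl) = 0) {i j : Fin n} (hij : i ≤ j) :
    (D (matrixUnit i j hij) : Matrix (Fin n) (Fin n) ℂ) =
      single i j ((D (matrixUnit i j hij) : Matrix (Fin n) (Fin n) ℂ) i j) := by
  rcases hij.eq_or_lt with rfl | hlt
  · simp [hdiag]
  set E := matrixUnit i j hij
  have hE : E * E = 0 := matrixUnit_mul_matrixUnit_of_ne hij hij hlt.ne'
  set M : Matrix (Fin n) (Fin n) ℂ := (D E : Matrix (Fin n) (Fin n) ℂ)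
  have absorb : ∀ a, matrixUnit a a le_rfl * E + E * matrixUnit a a le_rfl = E →
      single a a 1 * M + M * single a a 1 = M := by
    intro a ha
    have hidem : IsIdempotentElem (matrixUnit a a le_rfl + E) := by
      rw [IsIdempotentElem, add_mul, mul_add, mul_add, matrixUnit_mul_matrixUnit, hE, add_zero,
        add_assoc, ha]
    have := hD.map_mul_add_mul (.inl (matrixUnit_mul_matrixUnit le_rfl le_rfl))
      (.inr (by rw [hE, zero_mul])) (.inl hidem)
    rw [ha, hdiag, zero_mul, mul_zero, zero_add, add_zero] at this
    have := congrArg Subtype.val this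
    push_cast [coe_matrixUnit] at this
    exact this.symm
  refine eq_single_of_single_mul_add_mul_single (D E).2 hlt (absorb i ?_) (absorb j ?_)
  · rw [matrixUnit_mul_matrixUnit le_rfl hij, matrixUnit_mul_matrixUnit_of_ne hij le_rfl hlt.ne',
      add_zero]
  · rw [matrixUnit_mul_matrixUnit_of_ne le_rfl hij hlt.ne', matrixUnit_mul_matrixUnit hij le_rfl,
      zero_add]

theorem coe_map_matrixUnit_apply_eq_add (hD : IsDerivableAt D 1) {i j k : Fin n} (hij : i < j)
    (hjk : j < k) :
    (D (matrixUnit i k (hij.trans hjk).le) : Matrix (Fin n) (Fin n) ℂ) i k =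
      (D (matrixUnit i j hij.le) : Matrix (Fin n) (Fin n) ℂ) i j +
        (D (matrixUnit j k hjk.le) : Matrix (Fin n) (Fin n) ℂ) j k := by
  have hxx := matrixUnit_mul_matrixUnit_of_ne hij.le hij.le hij.ne'
  have hyy := matrixUnit_mul_matrixUnit_of_ne hjk.le hjk.le hjk.ne'
  have hxy := matrixUnit_mul_matrixUnit hij.le hjk.le
  have hyx := matrixUnit_mul_matrixUnit_of_ne hjk.le hij.le (hij.trans hjk).ne'
  have hsq : (matrixUnit i j hij.le + matrixUnit j k hjk.le) *
      (matrixUnit i j hij.le + matrixUnit j k hjk.le) = matrixUnit i k (hij.trans hjk).le := by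
    rw [add_mul, mul_add, mul_add, hxx, hyy, hxy, hyx, zero_add, add_zero, add_zero]
  have hcube : (matrixUnit i j hij.le + matrixUnit j k hjk.le) *
      (matrixUnit i j hij.le + matrixUnit j k hjk.le) *
      (matrixUnit i j hij.le + matrixUnit j k hjk.le) = 0 := by
    rw [hsq, mul_add, matrixUnit_mul_matrixUnit_of_ne _ _ (hij.trans hjk).ne',
      matrixUnit_mul_matrixUnit_of_ne _ _ hjk.ne', add_zero]
  have := hD.map_mul_add_mul (.inr (by rw [hxx, zero_mul])) (.inr (by rw [hyy, zero_mul]))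
    (.inr hcube)
  rw [hxy, hyx, add_zero] at this
  have := congrFun₂ (congrArg Subtype.val this) i k
  push_cast [coe_matrixUnit] at this
  rw [this, Matrix.add_apply, Matrix.add_apply, Matrix.add_apply, mul_single_apply_same,
    single_mul_apply_same, mul_single_apply_of_ne (hbj := hjk.ne'),
    single_mul_apply_of_ne (h := hij.ne)]
  simp

theorem exists_eq_mul_sub_mul_of_map_diag_eq_zero [NeZero n] (hD : IsDerivableAt D 1)
    (hdiag : ∀ i, D (matrixUnit i i le_rfl) = 0) :
    ∃ H : upperTriangularAlg n, ∀ X, D X = X * H - H * X := by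
  let c (i j : Fin n) (hij : i ≤ j) : ℂ := (D (matrixUnit i j hij) : Matrix (Fin n) (Fin n) ℂ) i j
  have hc : ∀ i j (hij : i ≤ j), c i j hij = c 0 j (Fin.zero_le j) - c 0 i (Fin.zero_le i) := by
    intro i j hij
    rcases (Fin.zero_le i).eq_or_lt with rfl | h0i
    · simp [c, hdiag]
    rcases hij.eq_or_lt with rfl | hlt
    · simp [c, hdiag]
    · simp only [c, coe_map_matrixUnit_apply_eq_add hD h0i hlt]
      ring
  let H : upperTriangularAlg n := ⟨diagonal fun i => c 0 i (Fin.zero_le i), diagonal_mem _⟩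
  refine ⟨H, LinearMap.congr_fun (g := LinearMap.mulRight ℂ H - LinearMap.mulLeft ℂ H) ?_⟩
  refine linearMap_ext fun i j hij => Subtype.ext ?_
  rw [coe_map_matrixUnit_eq_single hD hdiag hij]
  change single i j (c i j hij) = _
  rw [hc i j hij]
  ext k l
  simp [H, single_apply, mul_diagonal, diagonal_mul]
  split_ifs with hkl
  · obtain ⟨rfl, rfl⟩ := hkl
    rfl
  · simp

end upperTriangularAlg

/-- Let `n ≥ 2`, `A = T(n, ℂ)`, and `Ω = W` an invertible element of `A`.
Every linear `φ : A → A` with `φ(S) T + S φ(T) = φ(Ω)` whenever `S T = Ω` is an inner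
derivation: `φ(X) = X G − G X` for some `G`, which can be chosen in `A`. -/
theorem stmt15 (n : ℕ) (hn : 2 ≤ n) (W : upperTriangularAlg n) (hW : IsUnit W)
    (φ : upperTriangularAlg n →ₗ[ℂ] upperTriangularAlg n)
    (h : ∀ S T : upperTriangularAlg n, S * T = W → φ S * T + S * φ T = φ W) :
    ∃ G : upperTriangularAlg n, ∀ X : upperTriangularAlg n, φ X = X * G - G * X := by
  open upperTriangularAlg in
  have : NeZero n := ⟨by omega⟩
  have hφ : IsDerivableAt φ W := h
  have hW' : IsLeftRegular W := hW.isRegular.left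
  have hleib : φ ∘ₗ LinearMap.mulLeft ℂ W =
      LinearMap.mulLeft ℂ (φ W) + LinearMap.mulLeft ℂ W ∘ₗ φ :=
    linearMap_ext fun i j hij =>
      hφ.map_mul_left (hφ.map_one hW') (isIdempotentElem_or_mul_mul_self_eq_zero_matrixUnit hij)
  have h1 : IsDerivableAt φ 1 := hφ.one_of_map_mul_eq hW' (LinearMap.congr_fun hleib)
  obtain ⟨G, hG⟩ := h1.exists_map_eq_mul_sub_mul completeOrthogonalIdempotents_matrixUnit
  obtain ⟨H, hH⟩ := exists_eq_mul_sub_mul_of_map_diag_eq_zero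
    (h1.sub (isDerivableAt_mulRight_sub_mulLeft G 1)) (fun i => by simp [hG])
  refine ⟨G + H, fun X => ?_⟩
  have := hH X
  simp only [LinearMap.sub_apply, LinearMap.mulRight_apply, LinearMap.mulLeft_apply] at this
  rw [sub_eq_iff_eq_add.mp this]
  noncomm_ring
end
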